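/- Fix d = 2m, a real matrix A, and a time-symmetric second-order real basic method S for A which in addition is symplectic: S(z)ᵀ·J·S(z) = J for all z ∈ ℂ, where J is the canonical symplectic 2m×2m matrix. Let n ≥ 2 and let α_1, …, α_s ∈ ℂ be symmetric-conjugate (α_{s+1−j} = conj(α_j)), and suppose the composition P(h) = S(α_s h)⋯S(α_1 h) satisfies (fun h : ℝ => P(h) − exp(h·A)) = O(h^{2n}) as h → 0 (order 2n−1). Let R(h) be the entrywise real part of P(h). Then R is pseudo-symplectic of order 4n−1, i.e. (fun h : ℝ => R(h)ᵀ·J·R(h) − J) is O(h^{4n}) as h → 0. -/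

import Mathlib

/-!
Each factor `S (α_j h)` is `J`-symplectic, hence so is `P h`. Writing `P = R + i Q` with `R`, `Q`
real and taking real parts in `Pᵀ J P = J` gives `Rᵀ J R - J = Qᵀ J Q`. Since `exp (h A)` is real,
`Q` is the imaginary part of `P - exp (h A) = O(h^(2n))`, so `Qᵀ J Q = O(h^(4n))`.
-/

open Matrix Asymptotics Filter NormedSpace

attribute [local instance] Matrix.normedAddCommGroup Matrix.normedSpace

/-- The canonical symplectic matrix `J = [[0, 1], [-1, 0]]` on `ℝ^(m+m)`. -/
noncomputable def canonicalJ (m : ℕ) : Matrix (Fin (m + m)) (Fin (m + m)) ℝ :=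
  (Matrix.fromBlocks 0 1 (-1) 0).submatrix finSumFinEquiv.symm finSumFinEquiv.symm

namespace Matrix

variable {ι : Type*} [Fintype ι]

def symplecticSubmonoid {R : Type*} [CommRing R] [DecidableEq ι] (J : Matrix ι ι R) :
    Submonoid (Matrix ι ι R) where
  carrier := {M | Mᵀ * J * M = J}
  one_mem' := by simp
  mul_mem' {M N} (hM : Mᵀ * J * M = J) (hN : Nᵀ * J * N = J) :=
    show (M * N)ᵀ * J * (M * N) = J from
    calc (M * N)ᵀ * J * (M * N) = Nᵀ * (Mᵀ * J * M) * N := by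
          simp only [transpose_mul, Matrix.mul_assoc]
      _ = J := by rw [hM, hN]

theorem mem_symplecticSubmonoid {R : Type*} [CommRing R] [DecidableEq ι] {J M : Matrix ι ι R} :
    M ∈ symplecticSubmonoid J ↔ Mᵀ * J * M = J :=
  Iff.rfl

theorem map_re_mul_map_ofReal_mul (M N : Matrix ι ι ℂ) (J : Matrix ι ι ℝ) :
    (M * J.map Complex.ofReal * N).map Complex.re =
      M.map Complex.re * J * N.map Complex.re - M.map Complex.im * J * N.map Complex.im := by
  ext i j
  simp [mul_apply, Complex.re_sum, Finset.sum_mul, ← Finset.sum_sub_distrib]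

theorem transpose_mul_mul_map_re_sub_eq {P : Matrix ι ι ℂ} {J : Matrix ι ι ℝ}
    (hP : Pᵀ * J.map Complex.ofReal * P = J.map Complex.ofReal) :
    (P.map Complex.re)ᵀ * J * P.map Complex.re - J =
      (P.map Complex.im)ᵀ * J * P.map Complex.im := by
  have hJ : (J.map Complex.ofReal).map Complex.re = J := by
    ext i j
    simp
  have hre := congrArg (·.map Complex.re) hP
  simp only [map_re_mul_map_ofReal_mul, transpose_map, hJ] at hre
  exact sub_eq_iff_eq_add'.2 (sub_eq_iff_eq_add.1 hre)

variable [DecidableEq ι]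

theorem map_star_exp_map_ofReal (B : Matrix ι ι ℝ) :
    (exp (B.map Complex.ofReal)).map star = exp (B.map Complex.ofReal) := by
  have hB : (B.map Complex.ofReal)ᴴ = (B.map Complex.ofReal)ᵀ := by
    ext i j
    simp
  have h : (exp (B.map Complex.ofReal))ᴴ = (exp (B.map Complex.ofReal))ᵀ := by
    rw [← exp_conjTranspose, ← exp_transpose, hB]
  simpa [conjTranspose, transpose_map] using congrArg transpose h

theorem map_im_exp_map_ofReal (B : Matrix ι ι ℝ) :
    (exp (B.map Complex.ofReal)).map Complex.im = 0 := by
  ext i j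
  exact Complex.conj_eq_iff_im.1 (congrFun (congrFun (map_star_exp_map_ofReal B) i) j)

end Matrix

namespace Asymptotics.IsBigO

variable {ι α 𝕜 : Type*} [Fintype ι] [NormedField 𝕜] {l : Filter α} {u v : α → 𝕜}

theorem matrix_mul {R : Type*} [NormedRing R] {f g : α → Matrix ι ι R}
    (hf : f =O[l] u) (hg : g =O[l] v) :
    (fun x => f x * g x) =O[l] fun x => u x * v x := by
  refine isBigO_pi.2 fun i => isBigO_pi.2 fun j => ?_
  simp only [Matrix.mul_apply]
  exact IsBigO.fun_sum fun k _ =>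
    (isBigO_pi.1 (isBigO_pi.1 hf i) k).mul (isBigO_pi.1 (isBigO_pi.1 hg k) j)

theorem matrix_transpose {E : Type*} [NormedAddCommGroup E] {f : α → Matrix ι ι E}
    (hf : f =O[l] u) : (fun x => (f x)ᵀ) =O[l] u :=
  isBigO_pi.2 fun i => isBigO_pi.2 fun j => isBigO_pi.1 (isBigO_pi.1 hf j) i

theorem matrix_map_im {f : α → Matrix ι ι ℂ} (hf : f =O[l] u) :
    (fun x => (f x).map Complex.im) =O[l] u :=
  isBigO_pi.2 fun i => isBigO_pi.2 fun j =>
    (isBigO_of_le _ fun x => Complex.abs_im_le_norm (f x i j)).trans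
      (isBigO_pi.1 (isBigO_pi.1 hf i) j)

end Asymptotics.IsBigO

theorem symmetric_conjugate_odd_order_pseudo_symplectic
    (m s n : ℕ)
    (A : Matrix (Fin (m + m)) (Fin (m + m)) ℝ)
    (S : ℂ → Matrix (Fin (m + m)) (Fin (m + m)) ℂ)
    -- `S` is symplectic
    (hSymp : ∀ z : ℂ, (S z)ᵀ * (canonicalJ m).map Complex.ofReal * S z
      = (canonicalJ m).map Complex.ofReal)
    -- symmetric-conjugate coefficients
    (α : Fin s → ℂ)
    -- the composition `P h = S (α_s h) ⋯ S (α_1 h)`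
    (P : ℝ → Matrix (Fin (m + m)) (Fin (m + m)) ℂ)
    (hP : ∀ h : ℝ, P h = ((List.ofFn fun j : Fin s => S (α j * (h : ℂ))).reverse).prod)
    -- ... is of odd order `2n-1`
    (hPord : (fun h : ℝ => P h - NormedSpace.exp ((h : ℂ) • A.map Complex.ofReal))
      =O[nhds 0] fun h : ℝ => h ^ (2 * n))
    -- `R h` is the entrywise real part of `P h`
    (R : ℝ → Matrix (Fin (m + m)) (Fin (m + m)) ℝ)
    (hR : ∀ h : ℝ, R h = (P h).map Complex.re) :
    (fun h : ℝ => (R h)ᵀ * canonicalJ m * R h - canonicalJ m)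
      =O[nhds 0] fun h : ℝ => h ^ (4 * n) := by
  have hPsymp (h : ℝ) : P h ∈ symplecticSubmonoid ((canonicalJ m).map Complex.ofReal) := by
    rw [hP]
    refine Submonoid.list_prod_mem _ fun M hM => ?_
    obtain ⟨j, rfl⟩ := List.mem_ofFn.1 (List.mem_reverse.1 hM)
    exact hSymp _
  have hexp (h : ℝ) :
      (NormedSpace.exp ((h : ℂ) • A.map Complex.ofReal)).map Complex.im = 0 := by
    have hsmul : (h : ℂ) • A.map Complex.ofReal = (h • A).map Complex.ofReal := by
      ext i j
      simp
    rw [hsmul, map_im_exp_map_ofReal]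
  have hIm : (fun h : ℝ => (P h).map Complex.im) =O[nhds 0] fun h : ℝ => h ^ (2 * n) := by
    refine hPord.matrix_map_im.congr_left fun h => ?_
    ext i j
    simpa using congrFun (congrFun (hexp h) i) j
  have hJ : (fun _ : ℝ => canonicalJ m) =O[nhds 0] fun _ : ℝ => (1 : ℝ) :=
    isBigO_const_const _ one_ne_zero _
  refine (((hIm.matrix_transpose.matrix_mul hJ).matrix_mul hIm).congr (fun h => ?_)
    fun h => ?_)
  · rw [hR, transpose_mul_mul_map_re_sub_eq (mem_symplecticSubmonoid.1 (hPsymp h))]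
  · ring
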